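/- arXiv:0711.0083 — 7 statements merged into one kernel-verified Lean document; each statement's English description precedes it below -/
import Mathlib

section
/- Let F be a field and A, B ∈ F with −B³·(A³ + 27·B) ≠ 0. The Weierstrass curve W over F defined by y² + A·x·y − B·y = x³ has j-invariant j(W) = −A³·(A³ + 24·B)³ / (B³·(A³ + 27·B)). -/
/-- For the Weierstrass curve `W : y² + A·x·y − B·y = x³` over a field `F` with
nonzero discriminant `−B³·(A³ + 27·B) ≠ 0`, the j-invariant `c₄³/Δ` equals
`−A³·(A³ + 24·B)³ / (B³·(A³ + 27·B))`. -/
theorem stmt_1 (F : Type*) [Field F] (A B : F)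
    (hΔ : -B ^ 3 * (A ^ 3 + 27 * B) ≠ 0) :
    (⟨A, 0, -B, 0, 0⟩ : WeierstrassCurve F).c₄ ^ 3 / (⟨A, 0, -B, 0, 0⟩ : WeierstrassCurve F).Δ
      = -(A ^ 3 * (A ^ 3 + 24 * B) ^ 3) / (B ^ 3 * (A ^ 3 + 27 * B)) := by
  have hΔ' : (⟨A, 0, -B, 0, 0⟩ : WeierstrassCurve F).Δ = -B ^ 3 * (A ^ 3 + 27 * B) := by
    simp only [WeierstrassCurve.Δ, WeierstrassCurve.b₂, WeierstrassCurve.b₄,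
      WeierstrassCurve.b₆, WeierstrassCurve.b₈]
    ring
  have hc₄ : (⟨A, 0, -B, 0, 0⟩ : WeierstrassCurve F).c₄ = A * (A ^ 3 + 24 * B) := by
    simp only [WeierstrassCurve.c₄, WeierstrassCurve.b₂, WeierstrassCurve.b₄]
    ring
  rw [hΔ', hc₄]
  rw [div_eq_div_iff hΔ (by intro h; exact hΔ (by linear_combination -h))]
  ring
end

section
/- Let F be a field and A, B ∈ F with −B³·(A³ + 27·B) ≠ 0, so that the Weierstrass curve W : y² + A·x·y − B·y = x³ over F is an elliptic curve. Then (0, 0) is an affine F-rational point of W, its negative in the group W(F) is the point (0, B), and (0, 0) has order exactly 3 in W(F). -/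
open WeierstrassCurve
open Classical

namespace WeierstrassCurve.Affine

variable {F : Type*} [Field F] [DecidableEq F] {W : Affine F}

lemma slope_zero_zero (h₄ : W.a₄ = 0) : W.slope 0 0 0 0 = 0 := by
  unfold slope
  split_ifs <;> simp [h₄]

namespace Point

/-- On `y² + a₁xy + a₃y = x³` the tangent at `(0, 0)` is the line `y = 0`, which meets the curve
only there: `(0, 0)` is a flex, so `2P = -P`. -/
lemma add_self_some_zero_zero (h₂ : W.a₂ = 0) (h₄ : W.a₄ = 0) (h : W.Nonsingular 0 0) :
    some 0 0 h + some 0 0 h = -some 0 0 h := by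
  have ha₃ : W.a₃ ≠ 0 := by
    simpa [h₄] using (nonsingular_zero.mp h).2
  have hy : (0 : F) ≠ W.negY 0 0 := by simpa [negY] using ha₃
  rw [add_self_of_Y_ne' hy]
  congr 2 <;> simp [slope_zero_zero h₄, h₂]

lemma addOrderOf_some_zero_zero (h₂ : W.a₂ = 0) (h₄ : W.a₄ = 0) (h : W.Nonsingular 0 0) :
    addOrderOf (some 0 0 h) = 3 := by
  have : Fact (Nat.Prime 3) := ⟨Nat.prime_three⟩
  refine addOrderOf_eq_prime ?_ (some_ne_zero h)
  rw [show 3 = 2 + 1 from rfl, succ_nsmul, two_nsmul, add_self_some_zero_zero h₂ h₄ h,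
    neg_add_cancel]

end Point

end WeierstrassCurve.Affine

/-- For the Weierstrass curve `W : y² + A·x·y − B·y = x³` over a field `F` with
`−B³·(A³ + 27·B) ≠ 0` (so `W` is an elliptic curve), the point `(0, 0)` is an affine
`F`-rational point of `W`, it is nonsingular, its negative in the group `W(F)` is the
nonsingular point `(0, B)`, and `(0, 0)` has order exactly `3` in `W(F)`. -/
theorem stmt_2 (F : Type*) [Field F] (A B : F)
    (hΔ : -B ^ 3 * (A ^ 3 + 27 * B) ≠ 0) :
    (⟨A, 0, -B, 0, 0⟩ : WeierstrassCurve F).toAffine.Equation 0 0 ∧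
    ∃ (h₀ : (⟨A, 0, -B, 0, 0⟩ : WeierstrassCurve F).toAffine.Nonsingular 0 0)
      (h₁ : (⟨A, 0, -B, 0, 0⟩ : WeierstrassCurve F).toAffine.Nonsingular 0 B),
      -(Affine.Point.some 0 0 h₀) = Affine.Point.some 0 B h₁ ∧
      addOrderOf (Affine.Point.some 0 0 h₀) = 3 := by
  set W : Affine F := (⟨A, 0, -B, 0, 0⟩ : WeierstrassCurve F).toAffine
  have hB : B ≠ 0 := by
    rintro rfl
    simp at hΔ
  have h₀ : W.Nonsingular 0 0 := Affine.nonsingular_zero.mpr ⟨rfl, .inl (neg_ne_zero.mpr hB)⟩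
  have hnegY : W.negY 0 0 = B := by simp [Affine.negY, W]
  have h₁ : W.Nonsingular 0 B := hnegY ▸ (Affine.nonsingular_neg 0 0).mpr h₀
  refine ⟨h₀.1, h₀, h₁, ?_, Affine.Point.addOrderOf_some_zero_zero rfl rfl h₀⟩
  rw [Affine.Point.neg_some]
  congr
end

section
/- Let F be a field, t ∈ F, K a field extension of F, and α ∈ K a root of g(x;t) = x³ + t·x² − (t+3)·x + 1. Then α ≠ 0, α ≠ 1, and in K[x] one has the factorization g(x;t) = (x − α)·(x − 1/(1−α))·(x − (1 − 1/α)); in particular 1/(1−α) and 1 − 1/α are also roots of g(x;t). -/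
/-!
The Möbius map `x ↦ 1/(1 - x)` has order three and satisfies
`(1 - x)³ · g(1/(1 - x)) = -g(x)` and `x³ · g(1 - 1/x) = -g(x)`, so it permutes the roots of
`g(x;t)`. The orbit `α, 1/(1 - α), 1 - 1/α` of a root has elementary symmetric functions
`-t`, `-(t + 3)` and `-1`, which are exactly the coefficients of `g`, whence the factorization.
-/

open Polynomial

theorem X_sub_C_mul_X_sub_C_mul_X_sub_C {R : Type*} [CommRing R] (a b c : R) :
    (X - C a) * (X - C b) * (X - C c)
      = X ^ 3 - C (a + b + c) * X ^ 2 + C (a * b + a * c + b * c) * X - C (a * b * c) := by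
  simp only [map_add, map_mul]
  ring

theorem ne_zero_of_cyclicCubic_eq_zero {R : Type*} [CommRing R] [Nontrivial R] {s α : R}
    (hα : α ^ 3 + s * α ^ 2 - (s + 3) * α + 1 = 0) : α ≠ 0 := by
  rintro rfl
  simp at hα

theorem ne_one_of_cyclicCubic_eq_zero {R : Type*} [CommRing R] [Nontrivial R] {s α : R}
    (hα : α ^ 3 + s * α ^ 2 - (s + 3) * α + 1 = 0) : α ≠ 1 := by
  rintro rfl
  have : (-1 : R) = 0 := by linear_combination hα
  exact neg_ne_zero.mpr one_ne_zero this

section CyclicCubic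

variable {K : Type*} [Field K] {s α : K}

variable (s) in
theorem cyclicCubic_one_div_one_sub (hα : α ≠ 1) :
    (1 - α) ^ 3 * ((1 / (1 - α)) ^ 3 + s * (1 / (1 - α)) ^ 2 - (s + 3) * (1 / (1 - α)) + 1)
      = -(α ^ 3 + s * α ^ 2 - (s + 3) * α + 1) := by
  have : 1 - α ≠ 0 := sub_ne_zero.mpr hα.symm
  field_simp
  ring

variable (s) in
theorem cyclicCubic_one_sub_one_div (hα : α ≠ 0) :
    α ^ 3 * ((1 - 1 / α) ^ 3 + s * (1 - 1 / α) ^ 2 - (s + 3) * (1 - 1 / α) + 1)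
      = -(α ^ 3 + s * α ^ 2 - (s + 3) * α + 1) := by
  field_simp
  ring

theorem cyclicCubic_eq_zero_one_div_one_sub (hα : α ^ 3 + s * α ^ 2 - (s + 3) * α + 1 = 0) :
    (1 / (1 - α)) ^ 3 + s * (1 / (1 - α)) ^ 2 - (s + 3) * (1 / (1 - α)) + 1 = 0 := by
  have h1 := ne_one_of_cyclicCubic_eq_zero hα
  have h := cyclicCubic_one_div_one_sub s h1
  rw [hα, neg_zero] at h
  exact (mul_eq_zero.mp h).resolve_left (pow_ne_zero 3 (sub_ne_zero.mpr h1.symm))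

theorem cyclicCubic_eq_zero_one_sub_one_div (hα : α ^ 3 + s * α ^ 2 - (s + 3) * α + 1 = 0) :
    (1 - 1 / α) ^ 3 + s * (1 - 1 / α) ^ 2 - (s + 3) * (1 - 1 / α) + 1 = 0 := by
  have h0 := ne_zero_of_cyclicCubic_eq_zero hα
  have h := cyclicCubic_one_sub_one_div s h0
  rw [hα, neg_zero] at h
  exact (mul_eq_zero.mp h).resolve_left (pow_ne_zero 3 h0)

theorem cyclicCubic_orbit_sum (hα : α ^ 3 + s * α ^ 2 - (s + 3) * α + 1 = 0) :
    α + 1 / (1 - α) + (1 - 1 / α) = -s := by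
  have h0 := ne_zero_of_cyclicCubic_eq_zero hα
  have h1 : 1 - α ≠ 0 := sub_ne_zero.mpr (ne_one_of_cyclicCubic_eq_zero hα).symm
  field_simp
  linear_combination -hα

theorem cyclicCubic_orbit_pairwise_sum (hα : α ^ 3 + s * α ^ 2 - (s + 3) * α + 1 = 0) :
    α * (1 / (1 - α)) + α * (1 - 1 / α) + 1 / (1 - α) * (1 - 1 / α) = -(s + 3) := by
  have h0 := ne_zero_of_cyclicCubic_eq_zero hα
  have h1 : 1 - α ≠ 0 := sub_ne_zero.mpr (ne_one_of_cyclicCubic_eq_zero hα).symm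
  field_simp
  linear_combination -hα

theorem mul_one_div_one_sub_mul_one_sub_one_div (h0 : α ≠ 0) (h1 : α ≠ 1) :
    α * (1 / (1 - α)) * (1 - 1 / α) = -1 := by
  have : 1 - α ≠ 0 := sub_ne_zero.mpr h1.symm
  field_simp
  ring

theorem cyclicCubic_eq_prod_orbit (hα : α ^ 3 + s * α ^ 2 - (s + 3) * α + 1 = 0) :
    (X ^ 3 + C s * X ^ 2 - C (s + 3) * X + 1 : K[X])
      = (X - C α) * (X - C (1 / (1 - α))) * (X - C (1 - 1 / α)) := by
  rw [X_sub_C_mul_X_sub_C_mul_X_sub_C, cyclicCubic_orbit_sum hα,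
    cyclicCubic_orbit_pairwise_sum hα,
    mul_one_div_one_sub_mul_one_sub_one_div (ne_zero_of_cyclicCubic_eq_zero hα)
      (ne_one_of_cyclicCubic_eq_zero hα)]
  simp only [map_neg, map_one]
  ring

end CyclicCubic

/-- If `α` is a root (in a field extension `K` of `F`) of the generic cyclic cubic
polynomial `g(x;t) = x³ + t·x² − (t+3)·x + 1`, then `α ≠ 0`, `α ≠ 1`, the polynomial
factors over `K` as `(x − α)(x − 1/(1−α))(x − (1 − 1/α))`, and in particular
`1/(1−α)` and `1 − 1/α` are also roots. -/
theorem stmt_3 (F K : Type*) [Field F] [Field K] [Algebra F K] (t : F) (α : K)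
    (hα : α ^ 3 + algebraMap F K t * α ^ 2 - (algebraMap F K t + 3) * α + 1 = 0) :
    α ≠ 0 ∧ α ≠ 1 ∧
    (X ^ 3 + C (algebraMap F K t) * X ^ 2 - C (algebraMap F K t + 3) * X + 1 : K[X])
      = (X - C α) * (X - C (1 / (1 - α))) * (X - C (1 - 1 / α)) ∧
    (1 / (1 - α)) ^ 3 + algebraMap F K t * (1 / (1 - α)) ^ 2
      - (algebraMap F K t + 3) * (1 / (1 - α)) + 1 = 0 ∧
    (1 - 1 / α) ^ 3 + algebraMap F K t * (1 - 1 / α) ^ 2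
      - (algebraMap F K t + 3) * (1 - 1 / α) + 1 = 0 :=
  ⟨ne_zero_of_cyclicCubic_eq_zero hα, ne_one_of_cyclicCubic_eq_zero hα,
    cyclicCubic_eq_prod_orbit hα, cyclicCubic_eq_zero_one_div_one_sub hα,
    cyclicCubic_eq_zero_one_sub_one_div hα⟩
end

section
/- Let K/F be a cyclic cubic extension of fields with Gal(K/F) = ⟨σ⟩, let t ∈ F, and let α ∈ K be a root of g(x;t) = x³ + t·x² − (t+3)·x + 1 with α ∉ F. Then N_{K/F}(α − σ(α))² = (t² + 3t + 9)², i.e. N_{K/F}(α − σ(α)) = ±δ(g). -/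
/-!
Since `α ∉ F` and `σ` generates the Galois group, the conjugates `α, σ α, σ² α` are pairwise
distinct roots of `g(x;t)`, hence all of its roots. Therefore the square of
`N_{K/F}(α − σ α) = (α − σ α)(σ α − σ² α)(σ² α − α)` is the discriminant of `g`,
which is `(t² + 3t + 9)²`.
-/

open Polynomial

namespace Cubic

variable {F K : Type*} [Field F] [Field K]

theorem roots_eq_of_ne {φ : F →+* K} {P : Cubic F} {x y z : K} (ha : P.a ≠ 0)
    (hx : x ∈ (map φ P).roots) (hy : y ∈ (map φ P).roots) (hz : z ∈ (map φ P).roots)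
    (hxy : x ≠ y) (hxz : x ≠ z) (hyz : y ≠ z) :
    (map φ P).roots = {x, y, z} := by
  have hnodup : ({x, y, z} : Multiset K).Nodup := by simp [hxy, hxz, hyz]
  have hle : ({x, y, z} : Multiset K) ≤ (map φ P).roots :=
    (Multiset.le_iff_subset hnodup).mpr fun w hw => by
      rcases Multiset.mem_cons.mp hw with rfl | hw
      · exact hx
      rcases Multiset.mem_cons.mp hw with rfl | hw
      · exact hy
      rwa [Multiset.mem_singleton.mp hw]
  refine (Multiset.eq_of_le_of_card_le hle ?_).symm
  calc Multiset.card (map φ P).roots ≤ (map φ P).toPoly.natDegree := card_roots' _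
    _ = 3 := natDegree_of_a_ne_zero ((map_ne_zero φ).mpr ha)
    _ = Multiset.card ({x, y, z} : Multiset K) := by simp

variable [Algebra F K]

theorem algEquiv_apply_mem_roots (σ : K ≃ₐ[F] K) {P : Cubic F} (ha : P.a ≠ 0) {x : K}
    (hx : x ∈ (map (algebraMap F K) P).roots) : σ x ∈ (map (algebraMap F K) P).roots := by
  rw [map_roots, mem_roots_map (ne_zero_of_a_ne_zero ha), ← aeval_def] at hx ⊢
  rw [aeval_algHom_apply, hx, map_zero]

end Cubic

def genericCyclicCubic {F : Type*} [Field F] (t : F) : Cubic F := ⟨1, t, -(t + 3), 1⟩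

section GenericCyclicCubic

variable {F : Type*} [Field F]

theorem genericCyclicCubic_discr (t : F) :
    (genericCyclicCubic t).discr = (t ^ 2 + 3 * t + 9) ^ 2 := by
  simp only [genericCyclicCubic, Cubic.discr]
  ring

theorem mem_roots_map_genericCyclicCubic_iff {K : Type*} [Field K] [Algebra F K] (t : F) (x : K) :
    x ∈ ((genericCyclicCubic t).map (algebraMap F K)).roots ↔
      x ^ 3 + algebraMap F K t * x ^ 2 - (algebraMap F K t + 3) * x + 1 = 0 := by
  rw [Cubic.mem_roots_iff (Cubic.ne_zero_of_a_ne_zero (by simp [genericCyclicCubic, Cubic.map]))]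
  simp only [genericCyclicCubic, Cubic.map, map_one, map_neg, map_add, map_ofNat]
  constructor <;> intro h <;> linear_combination h

end GenericCyclicCubic

section Cyclic

variable {F K : Type*} [Field F] [Field K] [Algebra F K] [IsGalois F K] [FiniteDimensional F K]
  {σ : K ≃ₐ[F] K}

theorem orderOf_eq_finrank_of_forall_mem_zpowers
    (hσ : ∀ τ : K ≃ₐ[F] K, τ ∈ Subgroup.zpowers σ) :
    orderOf σ = Module.finrank F K := by
  rw [orderOf_eq_card_of_forall_mem_zpowers hσ, IsGalois.card_aut_eq_finrank]

theorem Algebra.norm_eq_prod_pow_of_forall_mem_zpowers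
    (hσ : ∀ τ : K ≃ₐ[F] K, τ ∈ Subgroup.zpowers σ) (x : K) :
    algebraMap F K (Algebra.norm F x) = ∏ i ∈ Finset.range (orderOf σ), (σ ^ i) x := by
  classical
  rw [Algebra.norm_eq_prod_automorphisms, ← IsCyclic.image_range_orderOf hσ,
    Finset.prod_image fun i hi j hj =>
      pow_injOn_Iio_orderOf (by simpa using hi) (by simpa using hj)]

theorem mem_range_algebraMap_iff_of_forall_mem_zpowers
    (hσ : ∀ τ : K ≃ₐ[F] K, τ ∈ Subgroup.zpowers σ) (x : K) :
    x ∈ Set.range (algebraMap F K) ↔ σ x = x := by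
  rw [IsGalois.mem_range_algebraMap_iff_fixed]
  refine ⟨fun h => h σ, fun h τ => ?_⟩
  have hstab : σ ∈ MulAction.stabilizer (K ≃ₐ[F] K) x := h
  exact Subgroup.zpowers_le.mpr hstab (hσ τ)

end Cyclic

/-- Let `K/F` be a cyclic cubic extension with `Gal(K/F) = ⟨σ⟩`, and let `α ∈ K \ F` be a
root of the generic polynomial `g(x;t) = x³ + t·x² − (t+3)·x + 1`. Then
`N_{K/F}(α − σ(α))² = (t² + 3t + 9)²`, i.e. `N_{K/F}(α − σ(α)) = ±δ(g)`. -/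
theorem stmt_5 (F K : Type*) [Field F] [Field K] [Algebra F K] [IsGalois F K]
    (hdeg : Module.finrank F K = 3)
    (σ : K ≃ₐ[F] K) (hσ : ∀ τ : K ≃ₐ[F] K, τ ∈ Subgroup.zpowers σ)
    (t : F) (α : K)
    (hα : α ^ 3 + algebraMap F K t * α ^ 2 - (algebraMap F K t + 3) * α + 1 = 0)
    (hα' : α ∉ Set.range (algebraMap F K)) :
    (Algebra.norm F (α - σ α)) ^ 2 = (t ^ 2 + 3 * t + 9) ^ 2 := by
  have : FiniteDimensional F K := Module.finite_of_finrank_pos (by rw [hdeg]; norm_num)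
  have horder : orderOf σ = 3 := (orderOf_eq_finrank_of_forall_mem_zpowers hσ).trans hdeg
  have hσ3 : σ ^ 3 = 1 := horder ▸ pow_orderOf_eq_one σ
  have hcyc : σ (σ (σ α)) = α := by simpa [pow_succ] using DFunLike.congr_fun hσ3 α
  have hnorm : algebraMap F K (Algebra.norm F (α - σ α)) =
      (α - σ α) * (σ α - σ (σ α)) * (σ (σ α) - α) := by
    rw [Algebra.norm_eq_prod_pow_of_forall_mem_zpowers hσ, horder]
    simp [Finset.prod_range_succ, hcyc]
  have ha : (genericCyclicCubic t).a ≠ 0 := one_ne_zero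
  have hroot := (mem_roots_map_genericCyclicCubic_iff t α).mpr hα
  have hroot' := Cubic.algEquiv_apply_mem_roots σ ha hroot
  have hfix : σ α ≠ α := fun h =>
    hα' ((mem_range_algebraMap_iff_of_forall_mem_zpowers hσ α).mpr h)
  have hroots := Cubic.roots_eq_of_ne ha hroot hroot' (Cubic.algEquiv_apply_mem_roots σ ha hroot')
    hfix.symm (fun h => hfix (by nth_rewrite 1 [h]; exact hcyc))
    (fun h => hfix (σ.injective h).symm)
  apply (algebraMap F K).injective
  rw [map_pow, hnorm, ← genericCyclicCubic_discr, Cubic.discr_eq_prod_three_roots ha hroots]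
  simp only [genericCyclicCubic, map_one, one_mul]
  ring
end

section
/- Let K/F be a cyclic cubic extension of number fields. (i) If F contains no primitive cube root of unity, then F* ∩ (K*)³ = (F*)³, i.e. the natural homomorphism F*/(F*)³ → K*/(K*)³ induced by the inclusion F ⊆ K is injective. (ii) If F contains a primitive cube root of unity, then there exists D ∈ F* \ (F*)³ with K = F(∛D), and the kernel (F* ∩ (K*)³)/(F*)³ of this homomorphism is cyclic of order 3, generated by the class of D. -/
/-!
In prime degree `p` a primitive `p`-th root of unity of `K` already lies in `F` (its minimal
polynomial divides the `p`-th cyclotomic polynomial, of degree `p - 1`). So if `F` has none,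
`p`-th roots are unique in `K`, and a `p`-th root of an element of `F` is fixed by the Galois
group. If `ω ∈ F` is a primitive `p`-th root of unity, Kummer theory gives `K = F(α)` with
`α ^ p = D ∈ F` and `X ^ p - D` irreducible, and a generator `σ` with `σ α = ω α`. If
`y ^ p = x ∈ F` then `σ y = ω ^ c y`, so `y / α ^ c` is fixed by `σ`, hence lies in `F`, and
`x = D ^ c z ^ p`.
-/

open Module Polynomial IntermediateField

section RootsOfUnity

variable {K : Type*} [Field K]

lemma eq_of_pow_eq_pow_of_not_exists_isPrimitiveRoot {p : ℕ} (hp : p.Prime)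
    (hK : ¬∃ ω : K, IsPrimitiveRoot ω p) {a b : K} (h : a ^ p = b ^ p) : a = b := by
  rcases eq_or_ne b 0 with rfl | hb
  · rw [zero_pow hp.ne_zero] at h
    exact pow_eq_zero_iff hp.ne_zero |>.mp h
  by_contra hab
  have hunit : (a / b) ^ p = 1 := by rw [div_pow, h, div_self (pow_ne_zero _ hb)]
  have hne : a / b ≠ 1 := fun h' => hab ((div_eq_one_iff_eq hb).mp h')
  exact hK ⟨a / b, isPrimitiveRoot_of_mem_nthRootsFinset hp
    ((mem_nthRootsFinset hp.pos 1).2 hunit) hne⟩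

lemma IsPrimitiveRoot.exists_eq_pow_mul_of_pow_eq_pow {n : ℕ} (hn : 0 < n) {ω : K}
    (hω : IsPrimitiveRoot ω n) {a b : K} (h : a ^ n = b ^ n) : ∃ i < n, a = ω ^ i * b := by
  have ha : a ∈ nthRoots n (b ^ n) := (mem_nthRoots hn).2 h
  rw [hω.nthRoots_eq rfl, Multiset.mem_map] at ha
  obtain ⟨i, hi, rfl⟩ := ha
  exact ⟨i, Multiset.mem_range.1 hi, rfl⟩

end RootsOfUnity

section Kummer

variable {F K : Type*} [Field F] [Field K] [Algebra F K]

lemma AlgEquiv.pow_apply_eq_pow_of_algebraMap_eq_pow (σ : K ≃ₐ[F] K) {n : ℕ} {x : F} {y : K}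
    (hy : algebraMap F K x = y ^ n) : σ y ^ n = y ^ n := by
  rw [← map_pow, ← hy, σ.commutes]

lemma exists_isPrimitiveRoot_of_finrank_eq_prime [FiniteDimensional F K] {p : ℕ} (hp : p.Prime)
    (hdeg : finrank F K = p) {ω : K} (hω : IsPrimitiveRoot ω p) :
    ∃ ζ : F, IsPrimitiveRoot ζ p := by
  have hdvd : minpoly F ω ∣ cyclotomic p F := by
    refine minpoly.dvd F ω ?_
    rw [aeval_def, eval₂_eq_eval_map, map_cyclotomic]
    exact hω.isRoot_cyclotomic hp.pos
  have hle : (minpoly F ω).natDegree ≤ p - 1 := by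
    simpa [natDegree_cyclotomic, Nat.totient_prime hp] using
      natDegree_le_of_dvd hdvd (cyclotomic_ne_zero p F)
  have hdeg_dvd : (minpoly F ω).natDegree ∣ p := hdeg ▸ minpoly.degree_dvd (.of_finite F ω)
  have hone : (minpoly F ω).natDegree = 1 := by
    rcases hp.eq_one_or_self_of_dvd _ hdeg_dvd with h | h
    · exact h
    · have := hp.pos; omega
  obtain ⟨ζ, rfl⟩ := minpoly.natDegree_eq_one_iff.1 hone
  exact ⟨ζ, hω.of_map_of_injective (algebraMap F K).injective⟩

lemma mem_range_algebraMap_of_apply_eq_of_finrank_prime [FiniteDimensional F K] [IsGalois F K]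
    (hp : (finrank F K).Prime) {σ : K ≃ₐ[F] K} (hσ : σ ≠ 1) {u : K} (h : σ u = u) :
    u ∈ Set.range (algebraMap F K) := by
  have : Fact (Nat.card (K ≃ₐ[F] K)).Prime := ⟨IsGalois.card_aut_eq_finrank F K ▸ hp⟩
  have hgen : Subgroup.zpowers σ = ⊤ :=
    (Subgroup.zpowers σ).eq_bot_or_eq_top_of_prime_card.resolve_left
      (by rwa [Subgroup.zpowers_eq_bot])
  have hstab : MulAction.stabilizer (K ≃ₐ[F] K) u = ⊤ :=
    eq_top_iff.2 (hgen ▸ Subgroup.zpowers_le.2 h)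
  exact (IsGalois.mem_range_algebraMap_iff_fixed u).2 fun τ =>
    (hstab ▸ Subgroup.mem_top τ : τ ∈ MulAction.stabilizer _ u)

lemma exists_pow_eq_of_algebraMap_eq_pow [FiniteDimensional F K] [IsGalois F K] {p : ℕ}
    (hp : p.Prime) (hdeg : finrank F K = p) (hF : ¬∃ ζ : F, IsPrimitiveRoot ζ p)
    {x : F} {y : K} (hy : algebraMap F K x = y ^ p) : ∃ z : F, x = z ^ p := by
  have hK : ¬∃ ω : K, IsPrimitiveRoot ω p := fun ⟨_, hω⟩ =>
    hF (exists_isPrimitiveRoot_of_finrank_eq_prime hp hdeg hω)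
  obtain ⟨z, rfl⟩ := (IsGalois.mem_range_algebraMap_iff_fixed y).2 fun σ =>
    eq_of_pow_eq_pow_of_not_exists_isPrimitiveRoot hp hK
      (σ.pow_apply_eq_pow_of_algebraMap_eq_pow hy)
  exact ⟨z, (algebraMap F K).injective (by rw [hy, map_pow])⟩

lemma minpoly_eq_X_pow_sub_C {p : ℕ} {D : F} (hirr : Irreducible (X ^ p - C D)) {β : K}
    (hβ : β ^ p = algebraMap F K D) : minpoly F β = X ^ p - C D :=
  (minpoly.eq_of_irreducible_of_monic hirr (by simp [hβ])
    (monic_X_pow_sub_C _ (ne_zero_of_irreducible_X_pow_sub_C hirr))).symm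

lemma exists_algEquiv_apply_eq_mul [Normal F K] {p : ℕ} {D : F} (hirr : Irreducible (X ^ p - C D))
    {α : K} (hα : α ^ p = algebraMap F K D) {ω : F} (hω : ω ^ p = 1) :
    ∃ σ : K ≃ₐ[F] K, σ α = algebraMap F K ω * α := by
  have hωα : (algebraMap F K ω * α) ^ p = algebraMap F K D := by
    rw [mul_pow, ← map_pow, hω, map_one, one_mul, hα]
  obtain ⟨σ, hσ⟩ := (Normal.minpoly_eq_iff_mem_orbit K).1
    ((minpoly_eq_X_pow_sub_C hirr hωα).trans (minpoly_eq_X_pow_sub_C hirr hα).symm)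
  exact ⟨σ, hσ⟩

lemma exists_eq_pow_mul_pow_of_algebraMap_eq_pow [FiniteDimensional F K] [IsGalois F K] {p : ℕ}
    (hp : p.Prime) (hdeg : finrank F K = p) {ω : F} (hω : IsPrimitiveRoot ω p) {D : F}
    (hirr : Irreducible (X ^ p - C D)) {α : K} (hα : α ^ p = algebraMap F K D) {x : F} {y : K}
    (hy : algebraMap F K x = y ^ p) : ∃ c < p, ∃ z : F, x = D ^ c * z ^ p := by
  set ω' := algebraMap F K ω
  have hω' : IsPrimitiveRoot ω' p := hω.map_of_injective (algebraMap F K).injective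
  have hα0 : α ≠ 0 := by
    have hD : D ≠ 0 := fun h => (X_pow_sub_C_irreducible_iff_of_prime hp).1 hirr 0
      (by rw [h, zero_pow hp.ne_zero])
    rintro rfl
    exact hD ((algebraMap F K).injective (by rw [← hα, zero_pow hp.ne_zero, map_zero]))
  obtain ⟨σ, hσα⟩ := exists_algEquiv_apply_eq_mul hirr hα hω.pow_eq_one
  have hσ1 : σ ≠ 1 := by
    rintro rfl
    exact hω'.ne_one hp.one_lt (mul_eq_right₀ hα0 |>.1 hσα.symm)
  obtain ⟨c, hc, hσy⟩ := hω'.exists_eq_pow_mul_of_pow_eq_pow hp.pos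
    (σ.pow_apply_eq_pow_of_algebraMap_eq_pow hy)
  have hfix : σ (y / α ^ c) = y / α ^ c := by
    rw [map_div₀, map_pow, hσy, hσα, mul_pow,
      mul_div_mul_left _ _ (pow_ne_zero _ (hω'.ne_zero hp.ne_zero))]
  obtain ⟨z, hz⟩ := mem_range_algebraMap_of_apply_eq_of_finrank_prime (hdeg ▸ hp) hσ1 hfix
  refine ⟨c, hc, z, (algebraMap F K).injective ?_⟩
  rw [hy, map_mul, map_pow, map_pow, hz, ← hα, div_pow, ← pow_mul, ← pow_mul, mul_comm p c,
    mul_div_cancel₀ _ (pow_ne_zero _ hα0)]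

end Kummer

theorem stmt_6_general (F K : Type*) [Field F] [Field K]
    [Algebra F K] [IsGalois F K] (hdeg : Module.finrank F K = 3) :
    ((¬ ∃ ζ : F, IsPrimitiveRoot ζ 3) →
      ∀ x : F, (∃ y : K, algebraMap F K x = y ^ 3) → ∃ z : F, x = z ^ 3) ∧
    ((∃ ζ : F, IsPrimitiveRoot ζ 3) →
      ∃ D : F, D ≠ 0 ∧ (¬ ∃ z : F, D = z ^ 3) ∧
        (∃ d : K, d ^ 3 = algebraMap F K D ∧ IntermediateField.adjoin F {d} = ⊤) ∧
        ∀ x : F, x ≠ 0 →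
          ((∃ y : K, algebraMap F K x = y ^ 3) ↔
            ∃ z : F, x = z ^ 3 ∨ x = D * z ^ 3 ∨ x = D ^ 2 * z ^ 3)) := by
  have : FiniteDimensional F K := Module.finite_of_finrank_pos (by omega)
  have hp : Nat.Prime 3 := Nat.prime_three
  refine ⟨fun hF x ⟨y, hy⟩ => exists_pow_eq_of_algebraMap_eq_pow hp hdeg hF hy, ?_⟩
  rintro ⟨ζ, hζ⟩
  have : Fact (Nat.Prime 3) := ⟨hp⟩
  have : IsCyclic (K ≃ₐ[F] K) :=
    isCyclic_of_prime_card (by rw [IsGalois.card_aut_eq_finrank, hdeg])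
  obtain ⟨α, ⟨D, hD⟩, hgen⟩ := exists_root_adjoin_eq_top_of_isCyclic F K
    (hdeg ▸ ⟨ζ, (mem_primitiveRoots (by norm_num)).2 hζ⟩)
  have hirr : Irreducible (X ^ 3 - C D) :=
    hdeg ▸ irreducible_X_pow_sub_C_of_root_adjoin_eq_top hD.symm hgen
  rw [hdeg] at hD
  have hnot : ∀ b, b ^ 3 ≠ D := (X_pow_sub_C_irreducible_iff_of_prime hp).1 hirr
  refine ⟨D, fun h => hnot 0 (by simp [h]), fun ⟨z, hz⟩ => hnot z hz.symm,
    ⟨α, hD.symm, hgen⟩, fun x _ => ⟨?_, ?_⟩⟩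
  · rintro ⟨y, hy⟩
    obtain ⟨c, hc, z, rfl⟩ :=
      exists_eq_pow_mul_pow_of_algebraMap_eq_pow hp hdeg hζ hirr hD.symm hy
    refine ⟨z, ?_⟩
    interval_cases c <;> simp
  · have hcube (c : ℕ) (z : F) : ∃ y : K, algebraMap F K (D ^ c * z ^ 3) = y ^ 3 :=
      ⟨α ^ c * algebraMap F K z, by
        rw [mul_pow, ← pow_mul, mul_comm c, pow_mul, ← hD, map_mul, map_pow, map_pow]⟩
    rintro ⟨z, rfl | rfl | rfl⟩
    · simpa using hcube 0 z
    · simpa using hcube 1 z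
    · exact hcube 2 z

/-- Let `K/F` be a cyclic cubic extension of number fields.
(i) If `F` contains no primitive cube root of unity, then every element of `F` that becomes
a cube in `K` is already a cube in `F` (so `F*/(F*)³ → K*/(K*)³` is injective).
(ii) If `F` contains a primitive cube root of unity, then there is `D ∈ F* \ (F*)³` with
`K = F(∛D)`, and the kernel of `F*/(F*)³ → K*/(K*)³` is cyclic of order `3` generated by
the class of `D`: a nonzero `x ∈ F` is a cube in `K` iff `x ∈ {z³, D·z³, D²·z³ : z ∈ F}`. -/
theorem stmt_6 (F K : Type*) [Field F] [NumberField F] [Field K] [NumberField K]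
    [Algebra F K] [IsGalois F K] (hdeg : Module.finrank F K = 3) :
    ((¬ ∃ ζ : F, IsPrimitiveRoot ζ 3) →
      ∀ x : F, (∃ y : K, algebraMap F K x = y ^ 3) → ∃ z : F, x = z ^ 3) ∧
    ((∃ ζ : F, IsPrimitiveRoot ζ 3) →
      ∃ D : F, D ≠ 0 ∧ (¬ ∃ z : F, D = z ^ 3) ∧
        (∃ d : K, d ^ 3 = algebraMap F K D ∧ IntermediateField.adjoin F {d} = ⊤) ∧
        ∀ x : F, x ≠ 0 →
          ((∃ y : K, algebraMap F K x = y ^ 3) ↔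
            ∃ z : F, x = z ^ 3 ∨ x = D * z ^ 3 ∨ x = D ^ 2 * z ^ 3)) :=
  stmt_6_general F K hdeg
end

section
/- Let F be a number field, t ∈ F, and p a nonzero prime ideal of O_F with ν_p(t² + 3t + 9) < 0. Then the polynomial g(x;t) = x³ + t·x² − (t+3)·x + 1 splits into linear factors over the p-adic completion F_p of F. -/
/-!
Since `t² + 3t + 9` has negative valuation, so does `t`. The substitution `x = -t y` turns
`g(x; t)` into `-t³ (y³ - y² - c y - d)` with `c = t⁻¹ + 3t⁻²` and `d = t⁻³` both small, so the
new cubic is a perturbation of `y² (y - 1)`; its root near `1` is the fixed point of the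
contraction `y ↦ 1 + (c y + d) / y²` of the closed ball of radius `max ‖c‖ ‖d‖` around `1`.
One root `r` of `g` gives all three: the order-three Möbius map `x ↦ 1 / (1 - x)` permutes the
roots of `g`, which are therefore `r`, `1 / (1 - r)` and `(r - 1) / r`.
-/

open NumberField IsDedekindDomain Polynomial Metric Set IsUltrametricDist

section CyclicCubic

variable {K : Type*} [Field K]

noncomputable def cyclicCubic (t : K) : K[X] :=
  X ^ 3 + C t * X ^ 2 - C (t + 3) * X + 1

theorem isRoot_cyclicCubic_iff {t r : K} :
    (cyclicCubic t).IsRoot r ↔ r ^ 3 + t * r ^ 2 - (t + 3) * r + 1 = 0 := by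
  simp [cyclicCubic]

theorem cyclicCubic_eq_prod_of_isRoot {t r : K} (hr : (cyclicCubic t).IsRoot r) :
    cyclicCubic t = (X - C r) * (X - C (1 - r)⁻¹) * (X - C ((r - 1) / r)) := by
  rw [isRoot_cyclicCubic_iff] at hr
  have hr0 : r ≠ 0 := by rintro rfl; norm_num at hr
  have hr1 : 1 - r ≠ 0 := by
    intro h
    rw [← sub_eq_zero.mp h] at hr
    exact one_ne_zero (by linear_combination -hr : (1 : K) = 0)
  have e1 : r + (1 - r)⁻¹ + (r - 1) / r = -t := by field_simp; linear_combination -hr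
  have e2 : r * (1 - r)⁻¹ + r * ((r - 1) / r) + (1 - r)⁻¹ * ((r - 1) / r) = -(t + 3) := by
    field_simp; linear_combination -hr
  have e3 : r * (1 - r)⁻¹ * ((r - 1) / r) = -1 := by field_simp; ring
  have E1 := congrArg C e1
  have E2 := congrArg C e2
  have E3 := congrArg C e3
  simp only [cyclicCubic, C_add, C_mul, C_neg, C_1] at E1 E2 E3 ⊢
  linear_combination (X : K[X]) ^ 2 * E1 - X * E2 + E3

theorem splits_cyclicCubic_of_isRoot {t r : K} (hr : (cyclicCubic t).IsRoot r) :
    (cyclicCubic t).Splits := by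
  rw [cyclicCubic_eq_prod_of_isRoot hr]
  exact ((Splits.X_sub_C _).mul (Splits.X_sub_C _)).mul (Splits.X_sub_C _)

end CyclicCubic

section Ultrametric

variable {K : Type*} [NormedField K] [IsUltrametricDist K]

theorem norm_eq_one_of_norm_sub_one_lt_one {z : K} (hz : ‖z - 1‖ < 1) : ‖z‖ = 1 := by
  have h := norm_add_eq_max_of_norm_ne_norm (x := (1 : K)) (y := z - 1) (by simpa using hz.ne')
  simpa [hz.le] using h

theorem one_lt_norm_of_one_lt_norm_sq_add_three_mul_add_nine {x : K}
    (h : 1 < ‖x ^ 2 + 3 * x + 9‖) : 1 < ‖x‖ := by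
  contrapose! h
  have h3 : ‖(3 : K)‖ ≤ 1 := by exact_mod_cast norm_natCast_le_one K 3
  have h9 : ‖(9 : K)‖ ≤ 1 := by exact_mod_cast norm_natCast_le_one K 9
  refine (norm_add_le_max _ _).trans (max_le ((norm_add_le_max _ _).trans (max_le ?_ ?_)) h9)
  · rw [norm_pow]; exact pow_le_one₀ (norm_nonneg x) h
  · rw [norm_mul]; exact mul_le_one₀ h3 (norm_nonneg x) h

variable [CompleteSpace K]

theorem exists_cubic_root_of_norm_lt_one {c d : K} (hc : ‖c‖ < 1) (hd : ‖d‖ < 1) :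
    ∃ y : K, y ^ 3 - y ^ 2 - c * y - d = 0 := by
  set ε := max ‖c‖ ‖d‖
  have hε : ε < 1 := max_lt hc hd
  have hε0 : 0 ≤ ε := le_max_of_le_left (norm_nonneg c)
  have norm_eq_one : ∀ z ∈ closedBall (1 : K) ε, ‖z‖ = 1 := fun z hz =>
    norm_eq_one_of_norm_sub_one_lt_one ((mem_closedBall_iff_norm.mp hz).trans_lt hε)
  set φ : K → K := fun z => 1 + (c * z + d) / z ^ 2
  have hmaps : MapsTo φ (closedBall 1 ε) (closedBall 1 ε) := by
    intro z hz
    rw [mem_closedBall_iff_norm, add_sub_cancel_left, norm_div, norm_pow, norm_eq_one z hz,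
      one_pow, div_one]
    refine (norm_add_le_max _ _).trans (max_le_max ?_ le_rfl)
    rw [norm_mul, norm_eq_one z hz, mul_one]
  have hlip : ∀ w ∈ closedBall (1 : K) ε, ∀ z ∈ closedBall (1 : K) ε,
      dist (φ w) (φ z) ≤ ε * dist w z := by
    intro w hw z hz
    have hw1 := norm_eq_one w hw
    have hz1 := norm_eq_one z hz
    have hw0 : w ≠ 0 := norm_ne_zero_iff.mp (by rw [hw1]; exact one_ne_zero)
    have hz0 : z ≠ 0 := norm_ne_zero_iff.mp (by rw [hz1]; exact one_ne_zero)
    have hdiff : φ w - φ z = (z - w) * (c * (w * z) + d * (z + w)) / (w ^ 2 * z ^ 2) := by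
      simp only [φ]; field_simp; ring
    have hnum : ‖c * (w * z) + d * (z + w)‖ ≤ ε := by
      refine (norm_add_le_max _ _).trans (max_le_max ?_ ?_)
      · simp [hw1, hz1]
      · rw [norm_mul]
        exact mul_le_of_le_one_right (norm_nonneg d)
          ((norm_add_le_max _ _).trans (by simp [hw1, hz1]))
    rw [dist_eq_norm, dist_eq_norm, hdiff, norm_div, norm_mul, norm_mul, norm_pow, norm_pow, hw1,
      hz1, norm_sub_rev]
    simpa [mul_comm] using mul_le_mul_of_nonneg_left hnum (norm_nonneg (w - z))
  obtain ⟨y, hy, hfix, -⟩ := ContractingWith.exists_fixedPoint' (K := ⟨ε, hε0⟩)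
    isClosed_closedBall.isComplete hmaps
    ⟨hε, LipschitzWith.of_dist_le_mul fun w z => hlip w w.2 z z.2⟩
    (mem_closedBall_self hε0) (edist_ne_top _ _)
  have hy0 : y ≠ 0 := norm_ne_zero_iff.mp (by rw [norm_eq_one y hy]; exact one_ne_zero)
  have hfix : 1 + (c * y + d) / y ^ 2 = y := hfix
  field_simp at hfix
  exact ⟨y, by linear_combination -hfix⟩

theorem exists_isRoot_cyclicCubic_of_one_lt_norm {t : K} (ht : 1 < ‖t‖) :
    ∃ r : K, (cyclicCubic t).IsRoot r := by
  have ht0 : t ≠ 0 := norm_pos_iff.mp (one_pos.trans ht)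
  have hu : ‖t⁻¹‖ < 1 := by rw [norm_inv]; exact inv_lt_one_of_one_lt₀ ht
  have h3 : ‖(3 : K)‖ ≤ 1 := by exact_mod_cast norm_natCast_le_one K 3
  have hc : ‖t⁻¹ + 3 * t⁻¹ ^ 2‖ < 1 := by
    refine (norm_add_le_max _ _).trans_lt (max_lt hu ?_)
    rw [norm_mul, norm_pow]
    exact (mul_le_of_le_one_left (by positivity) h3).trans_lt
      (pow_lt_one₀ (norm_nonneg _) hu two_ne_zero)
  have hd : ‖t⁻¹ ^ 3‖ < 1 := by
    rw [norm_pow]; exact pow_lt_one₀ (norm_nonneg _) hu three_ne_zero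
  obtain ⟨y, hy⟩ := exists_cubic_root_of_norm_lt_one hc hd
  refine ⟨-t * y, isRoot_cyclicCubic_iff.mpr ?_⟩
  have h : -t ^ 3 * (y ^ 3 - y ^ 2 - (t⁻¹ + 3 * t⁻¹ ^ 2) * y - t⁻¹ ^ 3) = 0 := by
    rw [hy, mul_zero]
  field_simp at h
  linear_combination h

end Ultrametric

/-- Let `F` be a number field, `t ∈ F`, and `p` a nonzero prime of `O_F` with
`ν_p(t² + 3t + 9) < 0` (expressed multiplicatively: the `p`-adic valuation of
`t² + 3t + 9` is greater than `1`). Then `g(x;t) = x³ + t·x² − (t+3)·x + 1` splits into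
linear factors over the `p`-adic completion `F_p` of `F`. -/
theorem stmt_11 (F : Type*) [Field F] [NumberField F] (t : F)
    (p : HeightOneSpectrum (𝓞 F))
    (hv : 1 < p.valuation F (t ^ 2 + 3 * t + 9)) :
    Polynomial.Splits (Polynomial.map (RingHom.id (p.adicCompletion F))
      (X ^ 3 + C (algebraMap F (p.adicCompletion F) t) * X ^ 2
        - C (algebraMap F (p.adicCompletion F) t + 3) * X + 1)) := by
  set T := algebraMap F (p.adicCompletion F) t
  have hT : 1 < ‖T‖ := by
    refine one_lt_norm_of_one_lt_norm_sq_add_three_mul_add_nine ?_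
    have h : Valued.v (algebraMap F (p.adicCompletion F) (t ^ 2 + 3 * t + 9)) =
        p.valuation F (t ^ 2 + 3 * t + 9) := p.valuedAdicCompletion_eq_valuation' _
    simp only [map_add, map_pow, map_mul, map_ofNat] at h
    rw [Valued.toNormedField.one_lt_norm_iff, h]
    exact hv
  obtain ⟨r, hr⟩ := exists_isRoot_cyclicCubic_of_one_lt_norm hT
  rw [Polynomial.map_id]
  exact splits_cyclicCubic_of_isRoot hr
end

section
/- Let K/F be a cyclic cubic extension of fields with Gal(K/F) = ⟨σ⟩ and let {1, α₁, α₂} be an F-basis of K. Let a, b, c ∈ F with (a, b, c) ≠ (0, 0, 0), let L be a field extension of K, and suppose x, y, z, w ∈ L with (x, y, z, w) ≠ (0, 0, 0, 0) satisfy: (x + yα₁ + zα₂)(x + yσ(α₁) + zσ(α₂))(x + yσ²(α₁) + zσ²(α₂)) = w³, a(x − w) + by + cz = 0, and x + yα₁ + zα₂ = 0. Then w = 0 and there exists λ ∈ L with (x, y, z) = λ·(cα₁ − bα₂, aα₂ − c, −aα₁ + b). In particular the only zero of the linear form x + yα₁ + zα₂ on the hyperplane section 𝒳_H is the point 𝒪'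 = [cα₁ − bα₂, aα₂ − c, −aα₁ + b, 0]. -/
/-!
The first factor of the norm form vanishes, so `w ^ 3 = 0`. Then `(x, y, z)` is orthogonal
to both `(1, α₁, α₂)` and `(a, b, c)`. These two vectors have nonzero cross product, since
`1, α₁, α₂` are linearly independent over `F` while `(a, b, c)` is a nonzero vector over `F`;
so the common kernel of the two linear forms is the line spanned by that cross product, which
is `(cα₁ − bα₂, aα₂ − c, b − aα₁)`.
-/

open Matrix

theorem exists_eq_smul_cross_of_dotProduct_eq_zero {L : Type*} [Field L] {u v p : Fin 3 → L}
    (huv : u ⨯₃ v ≠ 0) (hu : u ⬝ᵥ p = 0) (hv : v ⬝ᵥ p = 0) :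
    ∃ t : L, p = t • u ⨯₃ v := by
  have hcross : u ⨯₃ v ⨯₃ p = 0 := by
    rw [cross_cross_eq_smul_sub_smul, hu, hv, zero_smul, zero_smul, sub_zero]
  have hdep : ¬ LinearIndependent L ![u ⨯₃ v, p] :=
    fun h ↦ crossProduct_ne_zero_iff_linearIndependent.mpr h hcross
  rw [LinearIndependent.pair_iff' huv, not_forall_not] at hdep
  obtain ⟨t, ht⟩ := hdep
  exact ⟨t, ht.symm⟩

theorem cross_algebraMap_comp_ne_zero {F L : Type*} [Field F] [Field L] [Algebra F L]
    {u : Fin 3 → L} (hu : LinearIndependent F u) {v : Fin 3 → F} (hv : v ≠ 0) :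
    u ⨯₃ (algebraMap F L ∘ v) ≠ 0 := by
  intro h
  have h0 := congrFun h 0
  have h1 := congrFun h 1
  simp [cross_apply] at h0 h1
  have hu' := Fintype.linearIndependent_iff.mp hu
  have e0 := hu' ![0, v 2, -v 1] (by
    simp [Fin.sum_univ_three, Algebra.smul_def]; linear_combination h0)
  have e1 := hu' ![-v 2, 0, v 0] (by
    simp [Fin.sum_univ_three, Algebra.smul_def]; linear_combination h1)
  apply hv
  ext i
  fin_cases i
  · simpa using e1 2
  · simpa using e0 2
  · simpa using e0 1

theorem stmt_19_general (F K L : Type*) [Field F] [Field K] [Field L]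
    [Algebra F K] [Algebra K L] [Algebra F L] [IsScalarTower F K L]
    (σ : K ≃ₐ[F] K)
    (α₁ α₂ : K) (B : Module.Basis (Fin 3) F K) (hB0 : B 0 = 1) (hB1 : B 1 = α₁) (hB2 : B 2 = α₂)
    (a b c : F) (habc : ¬ (a = 0 ∧ b = 0 ∧ c = 0))
    (x y z w : L)
    (hcubic : (x + y * algebraMap K L α₁ + z * algebraMap K L α₂) *
        (x + y * algebraMap K L (σ α₁) + z * algebraMap K L (σ α₂)) *
        (x + y * algebraMap K L (σ (σ α₁)) + z * algebraMap K L (σ (σ α₂))) = w ^ 3)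
    (hplane : algebraMap F L a * (x - w) + algebraMap F L b * y + algebraMap F L c * z = 0)
    (hzero : x + y * algebraMap K L α₁ + z * algebraMap K L α₂ = 0) :
    w = 0 ∧ ∃ lam : L,
      x = lam * algebraMap K L (c • α₁ - b • α₂) ∧
      y = lam * algebraMap K L (a • α₂ - algebraMap F K c) ∧
      z = lam * algebraMap K L (-(a • α₁) + algebraMap F K b) := by
  have hw : w = 0 := pow_eq_zero_iff three_ne_zero |>.mp <| by
    rw [← hcubic, hzero, zero_mul, zero_mul]
  subst hw
  have hu : LinearIndependent F ![1, algebraMap K L α₁, algebraMap K L α₂] := by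
    have hB : ![1, algebraMap K L α₁, algebraMap K L α₂] = algebraMap K L ∘ B := by
      ext i; fin_cases i <;> simp [hB0, hB1, hB2]
    rw [hB]
    exact B.linearIndependent.map' (IsScalarTower.toAlgHom F K L).toLinearMap
      (LinearMap.ker_eq_bot.mpr (algebraMap K L).injective)
  have hv : ![a, b, c] ≠ 0 := by
    simpa [← List.ofFn_inj] using habc
  obtain ⟨t, ht⟩ := exists_eq_smul_cross_of_dotProduct_eq_zero (p := ![x, y, z])
    (cross_algebraMap_comp_ne_zero hu hv)
    (by rw [vec3_dotProduct]; simp; linear_combination hzero)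
    (by rw [vec3_dotProduct]; simp; linear_combination hplane)
  refine ⟨rfl, t, ?_, ?_, ?_⟩ <;>
    [have h := congrFun ht 0; have h := congrFun ht 1; have h := congrFun ht 2] <;>
    (simp [cross_apply, Algebra.smul_def, IsScalarTower.algebraMap_apply F K L] at h ⊢
     linear_combination h)

/-- Let `K/F` be a cyclic cubic extension with `Gal(K/F) = ⟨σ⟩` and `F`-basis
`{1, α₁, α₂}` of `K`. Let `a, b, c ∈ F`, not all zero, and let `L/K` be a field
extension. If `(x, y, z, w) ≠ 0` in `L⁴` satisfies the cubic equation
`(x + yα₁ + zα₂)(x + yσ(α₁) + zσ(α₂))(x + yσ²(α₁) + zσ²(α₂)) = w³`, the hyperplane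
equation `a(x − w) + by + cz = 0`, and `x + yα₁ + zα₂ = 0`, then `w = 0` and
`(x, y, z) = λ·(cα₁ − bα₂, aα₂ − c, −aα₁ + b)` for some `λ ∈ L`; i.e. the only zero of
`x + yα₁ + zα₂` on `𝒳_H` is `𝒪' = [cα₁ − bα₂, aα₂ − c, −aα₁ + b, 0]`. -/
theorem stmt_19 (F K L : Type*) [Field F] [Field K] [Field L]
    [Algebra F K] [Algebra K L] [Algebra F L] [IsScalarTower F K L]
    [IsGalois F K] (hdeg : Module.finrank F K = 3)
    (σ : K ≃ₐ[F] K) (hσ : ∀ τ : K ≃ₐ[F] K, τ ∈ Subgroup.zpowers σ)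
    (α₁ α₂ : K) (B : Module.Basis (Fin 3) F K) (hB0 : B 0 = 1) (hB1 : B 1 = α₁) (hB2 : B 2 = α₂)
    (a b c : F) (habc : ¬ (a = 0 ∧ b = 0 ∧ c = 0))
    (x y z w : L) (hxyzw : ¬ (x = 0 ∧ y = 0 ∧ z = 0 ∧ w = 0))
    (hcubic : (x + y * algebraMap K L α₁ + z * algebraMap K L α₂) *
        (x + y * algebraMap K L (σ α₁) + z * algebraMap K L (σ α₂)) *
        (x + y * algebraMap K L (σ (σ α₁)) + z * algebraMap K L (σ (σ α₂))) = w ^ 3)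
    (hplane : algebraMap F L a * (x - w) + algebraMap F L b * y + algebraMap F L c * z = 0)
    (hzero : x + y * algebraMap K L α₁ + z * algebraMap K L α₂ = 0) :
    w = 0 ∧ ∃ lam : L,
      x = lam * algebraMap K L (c • α₁ - b • α₂) ∧
      y = lam * algebraMap K L (a • α₂ - algebraMap F K c) ∧
      z = lam * algebraMap K L (-(a • α₁) + algebraMap F K b) :=
  stmt_19_general F K L σ α₁ α₂ B hB0 hB1 hB2 a b c habc x y z w hcubic hplane hzero
end
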